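/- For every p ≥ 1 and every i with 3 ≤ i ≤ 2n: (1) (R^{2p}·ω)(e_1, e_2, …, e_1, e_2, e_1, e_i), with 2p leading pairs (e_1, e_2) followed by e_1, e_i, equals (α² + β²)^p ω(e_1, e_i); (2) (R^{2p}·ω)(e_1, e_2, …, e_1, e_2, e_2, e_i), with 2p leading pairs (e_1, e_2) followed by e_2, e_i, equals (α² + β²)^p ω(e_2, e_i). -/

import Mathlib

noncomputable section

/-- Gauss-equation curvature `R(X,Y)Z = h(Y,Z)·S(X) − h(X,Z)·S(Y)`. -/
def RR {V : Type*} [AddCommGroup V] [Module ℝ V]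
    (h : V →ₗ[ℝ] V →ₗ[ℝ] ℝ) (S : V →ₗ[ℝ] V) (X Y Z : V) : V :=
  h Y Z • S X - h X Z • S Y

/-- One application of the curvature action on an `m`-linear form (encoded as a
function on lists of vectors): `(R·T)(X,Y,Z₁,…,Zₘ) = −∑ᵢ T(Z₁,…,R(X,Y)Zᵢ,…,Zₘ)`;
the two newest (leftmost) arguments are consumed. -/
def RAct {V : Type*} [AddCommGroup V] [Module ℝ V]
    (h : V →ₗ[ℝ] V →ₗ[ℝ] ℝ) (S : V →ₗ[ℝ] V) (T : List V → ℝ) : List V → ℝ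
  | X :: Y :: Zs =>
      -∑ i ∈ Finset.range Zs.length, T (Zs.set i (RR h S X Y (Zs.getD i 0)))
  | _ => 0

/-- `R^p · ω`, as a function on lists of vectors (of length `2p+2`):
`R⁰·ω = ω` and `R^p·ω = R·(R^{p−1}·ω)`. -/
def Rpow {V : Type*} [AddCommGroup V] [Module ℝ V]
    (h : V →ₗ[ℝ] V →ₗ[ℝ] ℝ) (S : V →ₗ[ℝ] V) (ω : V →ₗ[ℝ] V →ₗ[ℝ] ℝ) (p : ℕ) :
    List V → ℝ :=
  (RAct h S)^[p] (fun l => ω (l.getD 0 0) (l.getD 1 0))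

/-- The list `X, Y, X, Y, …` with `p` pairs `(X, Y)`. -/
def pairList {V : Type*} (X Y : V) : ℕ → List V
  | 0 => []
  | p + 1 => X :: Y :: pairList X Y p

/-- The list `f 1, y, f 2, y, …, f p, y`. -/
def interleave {V : Type*} (f : ℕ → V) (y : V) : ℕ → List V
  | 0 => []
  | p + 1 => interleave f y p ++ [f (p + 1), y]

/-!
On `U = span {e₁, e₂}` every curvature operator `R(u,v)` is a multiple of `A = R(e₁,e₂)`, which is
trace-free with `A² = α² + β²`; hence `R·R = 0` on `U`, i.e. each `R(u,v)` acts on `R` as a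
derivation. Unfolding `R^q·ω` on `u₁, v₁, …, u_q, v_q, Z, eᵢ` with `uₖ, vₖ, Z ∈ U`, the
derivation property collapses the sum over slots (the slot of `eᵢ` drops out since
`h(U, eᵢ) = 0`), leaving `(-1)^q ω(R(u₁,v₁) ⋯ R(u_q,v_q) Z, eᵢ)`. For the pairs `(e₁, e₂)` this
is `ω(A^{2p} Z, eᵢ) = (α² + β²)^p ω(Z, eᵢ)`.
-/

open Finset

section Lists

variable {α M : Type*} [AddCommMonoid M] (F : List α → M) (g : α → α) (d : α)

theorem sum_range_set_cons_cons (a b : α) (l : List α) :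
    ∑ j ∈ range (a :: b :: l).length, F ((a :: b :: l).set j (g ((a :: b :: l).getD j d))) =
      F (g a :: b :: l) + F (a :: g b :: l) +
        ∑ j ∈ range l.length, F (a :: b :: l.set j (g (l.getD j d))) := by
  rw [List.length_cons, List.length_cons, sum_range_succ', sum_range_succ']
  simp only [List.set_cons_succ, List.set_cons_zero, List.getD_cons_succ, List.getD_cons_zero,
    zero_add]
  abel

theorem sum_range_set_append_pair (l : List α) (z w : α) :
    ∑ j ∈ range (l ++ [z, w]).length, F ((l ++ [z, w]).set j (g ((l ++ [z, w]).getD j d))) =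
      ∑ j ∈ range l.length, F (l.set j (g (l.getD j d)) ++ [z, w]) +
        F (l ++ [g z, w]) + F (l ++ [z, g w]) := by
  rw [List.length_append, List.length_cons, List.length_cons, List.length_nil, sum_range_succ,
    sum_range_succ]
  have hz : (l ++ [z, w]).getD l.length d = z := by simp
  have hw : (l ++ [z, w]).getD (l.length + 1) d = w := by simp
  congr 2
  · refine sum_congr rfl fun j hj => ?_
    rw [mem_range] at hj
    rw [List.getD_append _ _ _ _ hj, List.set_append_left _ _ hj]
  · rw [hz, List.set_append_right _ _ le_rfl]
    simp
  · rw [hw, List.set_append_right _ _ (Nat.le_succ _)]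
    simp

theorem pairList_length (X Y : α) : ∀ k, (pairList X Y k).length = 2 * k
  | 0 => rfl
  | k + 1 => by simp [pairList, pairList_length X Y k]; ring

theorem forall_mem_pairList {P : α → Prop} {X Y : α} (hX : P X) (hY : P Y) :
    ∀ k, ∀ x ∈ pairList X Y k, P x
  | 0 => by simp [pairList]
  | k + 1 => by
    simpa [pairList, hX, hY] using forall_mem_pairList hX hY k

end Lists

section Curvature

variable {V : Type*} [AddCommGroup V] [Module ℝ V] (h : V →ₗ[ℝ] V →ₗ[ℝ] ℝ) (S : V →ₗ[ℝ] V)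

def RRₗ (X Y : V) : V →ₗ[ℝ] V := (h Y).smulRight (S X) - (h X).smulRight (S Y)

theorem RRₗ_apply (X Y Z : V) : RRₗ h S X Y Z = RR h S X Y Z := rfl

def RRComp : List V → V → V
  | u :: v :: us, Z => RR h S u v (RRComp us Z)
  | [], Z => Z
  | [_], _ => 0

@[simp] theorem RRComp_nil (Z : V) : RRComp h S [] Z = Z := rfl

@[simp] theorem RRComp_cons_cons (u v : V) (us : List V) (Z : V) :
    RRComp h S (u :: v :: us) Z = RR h S u v (RRComp h S us Z) := rfl

theorem Rpow_succ (ω : V →ₗ[ℝ] V →ₗ[ℝ] ℝ) (q : ℕ) :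
    Rpow h S ω (q + 1) = RAct h S (Rpow h S ω q) :=
  Function.iterate_succ_apply' _ _ _

theorem RAct_cons_cons_append_pair (T : List V → ℝ) (a b : V) (l : List V) (Z W : V) :
    RAct h S T (a :: b :: (l ++ [Z, W])) =
      -(∑ j ∈ range l.length, T (l.set j (RR h S a b (l.getD j 0)) ++ [Z, W]) +
        T (l ++ [RR h S a b Z, W]) + T (l ++ [Z, RR h S a b W])) := by
  rw [RAct, sum_range_set_append_pair]

/-- `R·R = 0` on `U`: every `R(u,v)` acts on `R` as a derivation. -/
def IsSemisymmetricOn (U : Submodule ℝ V) : Prop :=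
  ∀ u ∈ U, ∀ v ∈ U, ∀ X ∈ U, ∀ Y ∈ U, ∀ Z ∈ U,
    RR h S (RR h S u v X) Y Z + RR h S X (RR h S u v Y) Z =
      RR h S u v (RR h S X Y Z) - RR h S X Y (RR h S u v Z)

variable {h S}

theorem RRComp_pairList_two_mul {X Y Z : V} {c : ℝ} (hZ : RR h S X Y (RR h S X Y Z) = c • Z) :
    ∀ k, RRComp h S (pairList X Y (2 * k)) Z = c ^ k • Z
  | 0 => by simp [pairList]
  | k + 1 => by
    rw [show 2 * (k + 1) = 2 * k + 1 + 1 by ring]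
    simp only [pairList, RRComp_cons_cons, RRComp_pairList_two_mul hZ k, ← RRₗ_apply, map_smul]
    simp only [RRₗ_apply, hZ, smul_smul, pow_succ]

section Invariant

variable {U : Submodule ℝ V} (hU : ∀ u ∈ U, ∀ v ∈ U, ∀ Z, RR h S u v Z ∈ U)
include hU

theorem RRComp_mem : ∀ {us : List V}, (∀ x ∈ us, x ∈ U) → ∀ {Z}, Z ∈ U → RRComp h S us Z ∈ U
  | [], _, _, hZ => hZ
  | [_], _, _, _ => U.zero_mem
  | a :: b :: _, hus, _, hZ =>
    hU a (hus a (by simp)) b (hus b (by simp)) _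

theorem sum_RRComp_set (hsemi : IsSemisymmetricOn h S U) {u v : V} (hu : u ∈ U) (hv : v ∈ U) :
    ∀ {us : List V}, (∀ x ∈ us, x ∈ U) → ∀ {Z}, Z ∈ U →
      ∑ j ∈ range us.length, RRComp h S (us.set j (RR h S u v (us.getD j 0))) Z =
        RR h S u v (RRComp h S us Z) - RRComp h S us (RR h S u v Z)
  | [], _, _, _ => by simp
  | [_], _, _, _ => by simp [RRComp, ← RRₗ_apply]
  | a :: b :: rest, hus, Z, hZ => by
    have ha : a ∈ U := hus a (by simp)
    have hb : b ∈ U := hus b (by simp)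
    have hrest : ∀ x ∈ rest, x ∈ U := fun x hx => hus x (by simp [hx])
    have IH := sum_RRComp_set hsemi hu hv hrest hZ
    have hder := hsemi u hu v hv a ha b hb _ (RRComp_mem hU hrest hZ)
    rw [sum_range_set_cons_cons (fun l => RRComp h S l Z)]
    simp only [RRComp_cons_cons, ← RRₗ_apply, ← map_sum] at IH hder ⊢
    rw [IH, map_sub]
    linear_combination (norm := abel) hder

theorem Rpow_append_pair (ω : V →ₗ[ℝ] V →ₗ[ℝ] ℝ) (hsemi : IsSemisymmetricOn h S U) (q : ℕ) :
    ∀ {us : List V}, us.length = 2 * q → (∀ x ∈ us, x ∈ U) → ∀ {Z W : V}, Z ∈ U →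
      (∀ u ∈ U, ∀ v ∈ U, RR h S u v W = 0) →
      Rpow h S ω q (us ++ [Z, W]) = (-1) ^ q * ω (RRComp h S us Z) W := by
  induction q with
  | zero =>
    intro us hlen _ Z W _ _
    obtain rfl : us = [] := List.length_eq_zero_iff.mp hlen
    simp [Rpow]
  | succ q IH =>
    rintro (_ | ⟨a, _ | ⟨b, rest⟩⟩) hlen hus Z W hZ hW
    · simp at hlen
    · simp at hlen; omega
    have ha : a ∈ U := hus a (by simp)
    have hb : b ∈ U := hus b (by simp)
    have hrest : ∀ x ∈ rest, x ∈ U := fun x hx => hus x (by simp [hx])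
    have hlen' : rest.length = 2 * q := by simp at hlen; omega
    have hset : ∀ j ∈ range rest.length,
        Rpow h S ω q (rest.set j (RR h S a b (rest.getD j 0)) ++ [Z, W]) =
          (-1) ^ q * ω (RRComp h S (rest.set j (RR h S a b (rest.getD j 0))) Z) W := by
      refine fun j _ => IH (by simpa using hlen') (fun x hx => ?_) hZ hW
      rcases List.mem_or_eq_of_mem_set hx with hx | rfl
      exacts [hrest x hx, hU a ha b hb _]
    have hzero : ∀ u ∈ U, ∀ v ∈ U, RR h S u v 0 = 0 := fun u _ v _ => by simp [← RRₗ_apply]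
    rw [Rpow_succ, List.cons_append, List.cons_append, RAct_cons_cons_append_pair,
      sum_congr rfl hset, IH hlen' hrest (hU a ha b hb Z) hW, hW a ha b hb,
      IH hlen' hrest hZ hzero, ← mul_sum, ← LinearMap.sum_apply, ← map_sum,
      sum_RRComp_set hU hsemi ha hb hrest hZ, RRComp_cons_cons]
    simp only [map_sub, LinearMap.sub_apply, map_zero, pow_succ]
    ring

end Invariant

end Curvature

section ComplexBlock

variable {V : Type*} [AddCommGroup V] [Module ℝ V] {h : V →ₗ[ℝ] V →ₗ[ℝ] ℝ} {S : V →ₗ[ℝ] V}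
  {e₁ e₂ : V} {α β : ℝ}

open Submodule

theorem RR_eq_zero_of_mem_span_pair {W : V} (h₁ : h e₁ W = 0) (h₂ : h e₂ W = 0) :
    ∀ u ∈ span ℝ {e₁, e₂}, ∀ v ∈ span ℝ {e₁, e₂}, RR h S u v W = 0 := by
  have hspan : ∀ u ∈ span ℝ {e₁, e₂}, h u W = 0 := by
    rintro _ hu
    obtain ⟨a, b, rfl⟩ := mem_span_pair.mp hu
    simp [h₁, h₂]
  intro u hu v hv
  simp [RR, hspan u hu, hspan v hv]

/-- On `span {e₁, e₂}`, `S` is a complex Jordan block for the eigenvalue `α ± iβ`, and `h` is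
the hyperbolic form. -/
structure IsComplexBlock (h : V →ₗ[ℝ] V →ₗ[ℝ] ℝ) (S : V →ₗ[ℝ] V) (e₁ e₂ : V) (α β : ℝ) :
    Prop where
  S_e₁ : S e₁ = α • e₁ - β • e₂
  S_e₂ : S e₂ = β • e₁ + α • e₂
  h₁₁ : h e₁ e₁ = 0
  h₁₂ : h e₁ e₂ = 1
  h₂₁ : h e₂ e₁ = 1
  h₂₂ : h e₂ e₂ = 0

namespace IsComplexBlock

variable (B : IsComplexBlock h S e₁ e₂ α β)
include B

theorem RR_coords (a b c d x y : ℝ) :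
    RR h S (a • e₁ + b • e₂) (c • e₁ + d • e₂) (x • e₁ + y • e₂) =
      ((c * y + d * x) * (a * α + b * β) - (a * y + b * x) * (c * α + d * β)) • e₁ +
        ((c * y + d * x) * (b * α - a * β) - (a * y + b * x) * (d * α - c * β)) • e₂ := by
  simp only [RR, map_add, map_smul, LinearMap.add_apply, LinearMap.smul_apply, B.S_e₁, B.S_e₂,
    B.h₁₁, B.h₁₂, B.h₂₁, B.h₂₂, smul_eq_mul]
  module

theorem RR_mem :
    ∀ u ∈ span ℝ {e₁, e₂}, ∀ v ∈ span ℝ {e₁, e₂}, ∀ Z, RR h S u v Z ∈ span ℝ {e₁, e₂} := by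
  have hS : ∀ u ∈ span ℝ {e₁, e₂}, S u ∈ span ℝ {e₁, e₂} := by
    rintro _ hu
    obtain ⟨a, b, rfl⟩ := mem_span_pair.mp hu
    refine mem_span_pair.mpr ⟨a * α + b * β, b * α - a * β, ?_⟩
    simp only [map_add, map_smul, B.S_e₁, B.S_e₂]
    module
  intro u hu v hv Z
  exact sub_mem (smul_mem _ _ (hS u hu)) (smul_mem _ _ (hS v hv))

theorem isSemisymmetricOn : IsSemisymmetricOn h S (span ℝ {e₁, e₂}) := by
  rintro _ hu _ hv _ hX _ hY _ hZ
  obtain ⟨a₁, a₂, rfl⟩ := mem_span_pair.mp hu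
  obtain ⟨b₁, b₂, rfl⟩ := mem_span_pair.mp hv
  obtain ⟨c₁, c₂, rfl⟩ := mem_span_pair.mp hX
  obtain ⟨d₁, d₂, rfl⟩ := mem_span_pair.mp hY
  obtain ⟨z₁, z₂, rfl⟩ := mem_span_pair.mp hZ
  simp only [B.RR_coords]
  module

theorem RR_RR {Z : V} (hZ : Z ∈ span ℝ {e₁, e₂}) :
    RR h S e₁ e₂ (RR h S e₁ e₂ Z) = (α ^ 2 + β ^ 2) • Z := by
  obtain ⟨x, y, rfl⟩ := mem_span_pair.mp hZ
  have := B.RR_coords 1 0 0 1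
  simp only [one_smul, zero_smul, add_zero, zero_add] at this
  simp only [this]
  module

end IsComplexBlock

end ComplexBlock

theorem stmt17_general
    {V : Type*} [AddCommGroup V] [Module ℝ V]
    (n : ℕ) (e : ℕ → V)
    (h ω : V →ₗ[ℝ] V →ₗ[ℝ] ℝ)
    (S : V →ₗ[ℝ] V)
    (α β : ℝ)
    (hS1 : S (e 1) = α • e 1 - β • e 2)
    (hS2 : S (e 2) = β • e 1 + α • e 2)
    (hh12 : h (e 1) (e 2) = 1) (hh21 : h (e 2) (e 1) = 1)
    (hh0 : ∀ i j, 1 ≤ i → i ≤ 2 * n → 1 ≤ j → j ≤ 2 * n → min i j ≤ 2 →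
      ¬((i = 1 ∧ j = 2) ∨ (i = 2 ∧ j = 1)) → h (e i) (e j) = 0)
    (p : ℕ)
    (i : ℕ) (hi3 : 3 ≤ i) (hi : i ≤ 2 * n) :
    Rpow h S ω (2 * p) (pairList (e 1) (e 2) (2 * p) ++ [e 1, e i]) =
      (α ^ 2 + β ^ 2) ^ p * ω (e 1) (e i) ∧
    Rpow h S ω (2 * p) (pairList (e 1) (e 2) (2 * p) ++ [e 2, e i]) =
      (α ^ 2 + β ^ 2) ^ p * ω (e 2) (e i) := by
  set U := Submodule.span ℝ {e 1, e 2}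
  have he₁ : e 1 ∈ U := Submodule.subset_span (by simp)
  have he₂ : e 2 ∈ U := Submodule.subset_span (by simp)
  have B : IsComplexBlock h S (e 1) (e 2) α β :=
    ⟨hS1, hS2, hh0 1 1 (by omega) (by omega) (by omega) (by omega) (by omega) (by omega), hh12,
      hh21, hh0 2 2 (by omega) (by omega) (by omega) (by omega) (by omega) (by omega)⟩
  have hW : ∀ u ∈ U, ∀ v ∈ U, RR h S u v (e i) = 0 :=
    RR_eq_zero_of_mem_span_pair (hh0 1 i (by omega) (by omega) (by omega) hi (by omega) (by omega))
      (hh0 2 i (by omega) (by omega) (by omega) hi (by omega) (by omega))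
  have key : ∀ Z ∈ U, Rpow h S ω (2 * p) (pairList (e 1) (e 2) (2 * p) ++ [Z, e i]) =
      (α ^ 2 + β ^ 2) ^ p * ω Z (e i) := by
    intro Z hZ
    rw [Rpow_append_pair B.RR_mem ω B.isSemisymmetricOn _ (pairList_length _ _ _)
      (forall_mem_pairList he₁ he₂ _) hZ hW, RRComp_pairList_two_mul (B.RR_RR hZ), pow_mul]
    simp
  exact ⟨key _ he₁, key _ he₂⟩

theorem stmt17
    {V : Type*} [AddCommGroup V] [Module ℝ V]
    (n : ℕ) (hn : 2 ≤ n) (e : ℕ → V)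
    (hbasis : ∃ b : Module.Basis (Fin (2 * n)) ℝ V, ∀ i : Fin (2 * n), b i = e (i.1 + 1))
    (h ω : V →ₗ[ℝ] V →ₗ[ℝ] ℝ)
    (hsymm : ∀ X Y, h X Y = h Y X)
    (halt : ∀ X, ω X X = 0)
    (S : V →ₗ[ℝ] V)
    (α β : ℝ) (hβ : β ≠ 0)
    (hS1 : S (e 1) = α • e 1 - β • e 2)
    (hS2 : S (e 2) = β • e 1 + α • e 2)
    (hh12 : h (e 1) (e 2) = 1) (hh21 : h (e 2) (e 1) = 1)
    (hh0 : ∀ i j, 1 ≤ i → i ≤ 2 * n → 1 ≤ j → j ≤ 2 * n → min i j ≤ 2 →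
      ¬((i = 1 ∧ j = 2) ∨ (i = 2 ∧ j = 1)) → h (e i) (e j) = 0)
    (p : ℕ) (hp : 1 ≤ p)
    (i : ℕ) (hi3 : 3 ≤ i) (hi : i ≤ 2 * n) :
    Rpow h S ω (2 * p) (pairList (e 1) (e 2) (2 * p) ++ [e 1, e i]) =
      (α ^ 2 + β ^ 2) ^ p * ω (e 1) (e i) ∧
    Rpow h S ω (2 * p) (pairList (e 1) (e 2) (2 * p) ++ [e 2, e i]) =
      (α ^ 2 + β ^ 2) ^ p * ω (e 2) (e i) :=
  stmt17_general n e h ω S α β hS1 hS2 hh12 hh21 hh0 p i hi3 hi
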